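/- For every integer n ≥ 2 and all real x, the n-th derivative of the swish function swish(x) = x/(1+e^{−x}) satisfies |swish^{(n)}(x)| < n!. -/

import Mathlib

open Real

/-- The swish activation function. -/
noncomputable def swish (x : ℝ) : ℝ := x / (1 + Real.exp (-x))

/-!
The complex swish `z / (1 + e^{-z})` is holomorphic on the strip `|Im z| < π / 2`, where
`Re (1 + e^{±z}) ≥ 1`. For `x ≤ 0` it is bounded by `3` on the disc of radius `3 / 2` about `x`
(by `|z|` near the origin, by `|z| e^{Re z}` further left), so Cauchy's estimate gives
`|swish⁽ⁿ⁾ x| ≤ 3 n! / (3 / 2)ⁿ < n!` once `n ≥ 3`. The identity `swish x = x + swish (-x)`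
carries this over to `x ≥ 0`. For `n = 2` we use `swish'' = σ (1 - σ) (2 + x (1 - 2σ))` with
`σ = sigmoid`, together with `σ (1 - σ) ≤ 1 / 4` and `|x| σ (1 - σ) < 1`.
-/

open Complex Metric
open scoped ContDiff

lemma swish_eq_mul_sigmoid : swish = fun x => x * sigmoid x := by
  funext x; rw [swish, sigmoid_def, div_eq_mul_inv]

lemma contDiff_swish : ContDiff ℝ ω swish := by
  rw [swish_eq_mul_sigmoid]; exact contDiff_id.mul contDiff_sigmoid

lemma swish_eq_add_swish_neg (x : ℝ) : swish x = x + swish (-x) := by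
  simp only [swish_eq_mul_sigmoid, sigmoid_neg]; ring

lemma iteratedDeriv_swish_neg {n : ℕ} (hn : 2 ≤ n) (x : ℝ) :
    iteratedDeriv n swish (-x) = (-1) ^ n * iteratedDeriv n swish x := by
  have hsplit : swish = fun t => t + swish (-t) := funext swish_eq_add_swish_neg
  have hsmooth : ContDiffAt ℝ n (fun t => swish (-t)) (-x) :=
    ((contDiff_swish.comp contDiff_neg).of_le le_top).contDiffAt
  rw [congrArg (iteratedDeriv n · (-x)) hsplit,
    iteratedDeriv_fun_add (f := fun t => t) contDiffAt_id hsmooth, iteratedDeriv_fun_id,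
    iteratedDeriv_comp_neg, neg_neg, smul_eq_mul, if_neg (by omega), if_neg (by omega), zero_add]

lemma hasDerivAt_sigmoid_mul_one_sub_sigmoid (x : ℝ) :
    HasDerivAt (fun t => sigmoid t * (1 - sigmoid t))
      (sigmoid x * (1 - sigmoid x) * (1 - 2 * sigmoid x)) x :=
  ((hasDerivAt_sigmoid x).fun_mul ((hasDerivAt_sigmoid x).const_sub 1)).congr_deriv (by ring)

lemma deriv_swish :
    deriv swish = fun x => sigmoid x + x * (sigmoid x * (1 - sigmoid x)) := by
  rw [swish_eq_mul_sigmoid]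
  exact funext fun x => (((hasDerivAt_id' x).fun_mul (hasDerivAt_sigmoid x)).congr_deriv
    (by ring)).deriv

lemma iteratedDeriv_two_swish (x : ℝ) :
    iteratedDeriv 2 swish x = sigmoid x * (1 - sigmoid x) * (2 + x * (1 - 2 * sigmoid x)) := by
  rw [iteratedDeriv_succ, iteratedDeriv_one, deriv_swish]
  exact (((hasDerivAt_sigmoid x).fun_add ((hasDerivAt_id' x).fun_mul
    (hasDerivAt_sigmoid_mul_one_sub_sigmoid x))).congr_deriv (by ring)).deriv

lemma sigmoid_le_inv_two_sub {x : ℝ} (hx : x ≤ 0) : sigmoid x ≤ (2 - x)⁻¹ := by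
  rw [sigmoid_def]
  exact inv_anti₀ (by linarith) (by linarith [add_one_le_exp (-x)])

lemma abs_mul_sigmoid_mul_one_sub_sigmoid_lt_one (x : ℝ) :
    |x| * (sigmoid x * (1 - sigmoid x)) < 1 := by
  wlog hx : x ≤ 0 generalizing x
  · simpa [sigmoid_neg, mul_comm (sigmoid x)] using this (-x) (by linarith)
  have hs := sigmoid_le_inv_two_sub hx
  have h2x : 0 < 2 - x := by linarith
  calc |x| * (sigmoid x * (1 - sigmoid x)) ≤ -x * sigmoid x := by
        rw [abs_of_nonpos hx]
        have hs₀ := sigmoid_pos x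
        nlinarith [mul_nonneg (neg_nonneg.2 hx) (mul_pos hs₀ hs₀).le]
    _ ≤ -x * (2 - x)⁻¹ := by gcongr; linarith
    _ < 1 := by rw [← div_eq_mul_inv, div_lt_one h2x]; linarith

lemma abs_iteratedDeriv_two_swish_lt (x : ℝ) : |iteratedDeriv 2 swish x| < 2 := by
  have hs₀ := sigmoid_pos x
  have hs₁ := sigmoid_lt_one x
  have hquarter : sigmoid x * (1 - sigmoid x) ≤ 1 / 4 := by
    nlinarith [sq_nonneg (2 * sigmoid x - 1)]
  have hx := abs_mul_sigmoid_mul_one_sub_sigmoid_lt_one x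
  have h12 : |1 - 2 * sigmoid x| ≤ 1 := abs_le.mpr ⟨by linarith, by linarith⟩
  rw [iteratedDeriv_two_swish, abs_mul, abs_of_pos (mul_pos hs₀ (sub_pos.mpr hs₁))]
  calc sigmoid x * (1 - sigmoid x) * |2 + x * (1 - 2 * sigmoid x)|
      ≤ sigmoid x * (1 - sigmoid x) * (2 + |x|) := by
        gcongr
        calc |2 + x * (1 - 2 * sigmoid x)| ≤ |2| + |x * (1 - 2 * sigmoid x)| := abs_add_le _ _
          _ ≤ 2 + |x| := by
            rw [abs_two, abs_mul]
            gcongr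
            exact mul_le_of_le_one_right (abs_nonneg x) h12
    _ = 2 * (sigmoid x * (1 - sigmoid x)) + |x| * (sigmoid x * (1 - sigmoid x)) := by ring
    _ < 2 := by linarith

theorem iteratedDeriv_eq_re_iteratedDeriv_of_ofReal {f : ℂ → ℂ} {g : ℝ → ℝ} {U : Set ℂ}
    (hU : IsOpen U) (hf : DifferentiableOn ℂ f U) (hRU : ∀ x : ℝ, (x : ℂ) ∈ U)
    (hfg : ∀ x : ℝ, f x = g x) (n : ℕ) (x : ℝ) :
    iteratedDeriv n g x = (iteratedDeriv n f x).re := by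
  induction n generalizing x with
  | zero => simp [hfg]
  | succ n ih =>
    have hdiff : DifferentiableAt ℂ (iteratedDeriv n f) x := by
      rw [iteratedDeriv_eq_iterate]
      exact ((hf.analyticOnNhd hU).iterated_deriv n x (hRU x)).differentiableAt
    rw [iteratedDeriv_succ, iteratedDeriv_succ, funext ih, hdiff.hasDerivAt.real_of_complex.deriv]

lemma one_le_norm_one_add_exp {z : ℂ} (hz : |z.im| < π / 2) : 1 ≤ ‖1 + exp z‖ := by
  have hcos : 0 < Real.cos z.im := cos_pos_of_mem_Ioo (abs_lt.mp hz)
  calc (1 : ℝ) ≤ (1 + exp z).re := by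
        rw [add_re, one_re, exp_re]; nlinarith [Real.exp_pos z.re]
    _ ≤ ‖1 + exp z‖ := re_le_norm _

lemma one_add_exp_ne_zero {z : ℂ} (hz : |z.im| < π / 2) : 1 + exp z ≠ 0 :=
  norm_pos_iff.mp (one_pos.trans_le (one_le_norm_one_add_exp hz))

noncomputable def complexSwish (z : ℂ) : ℂ := z / (1 + exp (-z))

lemma complexSwish_ofReal (x : ℝ) : complexSwish x = swish x := by
  simp [complexSwish, swish, ofReal_exp]

lemma differentiableOn_complexSwish : DifferentiableOn ℂ complexSwish {z | |z.im| < π / 2} :=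
  differentiableOn_id.div
    ((Complex.differentiable_exp.comp differentiable_neg).const_add 1).differentiableOn
    fun z hz => one_add_exp_ne_zero (by simpa using hz)

lemma norm_complexSwish_le_norm {z : ℂ} (hz : |z.im| < π / 2) :
    ‖complexSwish z‖ ≤ ‖z‖ := by
  rw [complexSwish, norm_div]
  exact div_le_self (norm_nonneg z) (one_le_norm_one_add_exp (by simpa using hz))

lemma norm_complexSwish_le_norm_mul_exp {z : ℂ} (hz : |z.im| < π / 2) :
    ‖complexSwish z‖ ≤ ‖z‖ * Real.exp z.re := by
  have hfactor : 1 + exp (-z) = exp (-z) * (1 + exp z) := by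
    rw [mul_add, ← Complex.exp_add]; simp [add_comm]
  rw [complexSwish, hfactor, norm_div, norm_mul, norm_exp, neg_re, Real.exp_neg, ← div_div,
    div_inv_eq_mul]
  exact div_le_self (by positivity) (one_le_norm_one_add_exp hz)

lemma sub_mul_exp_le {c t : ℝ} (hc : 1 ≤ c) (ht : t ≤ 0) : (c - t) * Real.exp t ≤ c := by
  have h := add_one_le_exp (-t)
  have hprod : Real.exp t * Real.exp (-t) = 1 := by rw [← Real.exp_add]; simp
  nlinarith [Real.exp_pos t]

lemma closedBall_ofReal_subset {x r : ℝ} (hr : r < π / 2) :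
    closedBall (x : ℂ) r ⊆ {z | |z.im| < π / 2} := fun z hz => by
  have := abs_im_le_norm (z - x)
  simp only [sub_im, ofReal_im, sub_zero] at this
  exact this.trans_lt ((mem_closedBall_iff_norm.mp hz).trans_lt hr)

lemma norm_complexSwish_le_three {x : ℝ} (hx : x ≤ 0) {z : ℂ}
    (hz : z ∈ closedBall (x : ℂ) (3 / 2)) : ‖complexSwish z‖ ≤ 3 := by
  have him : |z.im| < π / 2 := closedBall_ofReal_subset (by linarith [pi_gt_three]) hz
  rw [mem_closedBall_iff_norm] at hz
  have hre : z.re ≤ x + 3 / 2 := by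
    have := re_le_norm (z - x)
    simp only [sub_re, ofReal_re] at this
    linarith
  have hnorm : ‖z‖ ≤ 3 / 2 - x := by
    calc ‖z‖ ≤ ‖z - x‖ + ‖(x : ℂ)‖ := norm_le_norm_sub_add z x
      _ ≤ 3 / 2 - x := by rw [norm_real, norm_eq_abs, abs_of_nonpos hx]; linarith
  rcases le_or_gt (-3 / 2) x with hx' | hx'
  · linarith [norm_complexSwish_le_norm him]
  · calc ‖complexSwish z‖ ≤ ‖z‖ * Real.exp z.re := norm_complexSwish_le_norm_mul_exp him
      _ ≤ (3 - (x + 3 / 2)) * Real.exp (x + 3 / 2) := by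
        gcongr <;> linarith
      _ ≤ 3 := sub_mul_exp_le (by norm_num) (by linarith)

lemma abs_iteratedDeriv_swish_lt_of_nonpos {n : ℕ} (hn : 3 ≤ n) {x : ℝ} (hx : x ≤ 0) :
    |iteratedDeriv n swish x| < n.factorial := by
  have hball := closedBall_ofReal_subset (x := x) (r := 3 / 2) (by linarith [pi_gt_three])
  have hcauchy := norm_iteratedDeriv_le_of_forall_mem_sphere_norm_le n (by norm_num)
    (differentiableOn_complexSwish.diffContOnCl_ball hball)
    fun z hz => norm_complexSwish_le_three hx (sphere_subset_closedBall hz)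
  have hpow : (3 : ℝ) < (3 / 2) ^ n :=
    (by norm_num : (3 : ℝ) < (3 / 2) ^ 3).trans_le (pow_le_pow_right₀ (by norm_num) hn)
  rw [iteratedDeriv_eq_re_iteratedDeriv_of_ofReal (isOpen_lt (by fun_prop) continuous_const)
    differentiableOn_complexSwish (fun x => by simp [pi_pos]) complexSwish_ofReal]
  calc |(iteratedDeriv n complexSwish x).re|
      ≤ ‖iteratedDeriv n complexSwish x‖ := abs_re_le_norm _
    _ ≤ n.factorial * 3 / (3 / 2) ^ n := hcauchy
    _ < n.factorial := by
      rw [div_lt_iff₀ (by positivity)]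
      gcongr

/-- For every `n ≥ 2` and all real `x`, `|swish^{(n)}(x)| < n!`. -/
theorem abs_iteratedDeriv_swish_lt (n : ℕ) (hn : 2 ≤ n) (x : ℝ) :
    |iteratedDeriv n swish x| < (n.factorial : ℝ) := by
  obtain rfl | hn₃ := hn.eq_or_lt
  · simpa using abs_iteratedDeriv_two_swish_lt x
  rcases le_total x 0 with hx | hx
  · exact abs_iteratedDeriv_swish_lt_of_nonpos hn₃ hx
  · rw [← neg_neg x, iteratedDeriv_swish_neg hn, abs_mul, abs_pow, abs_neg, abs_one, one_pow,
      one_mul]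
    exact abs_iteratedDeriv_swish_lt_of_nonpos hn₃ (neg_nonpos.mpr hx)
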